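/- arXiv:1312.7170 — 4 statements merged into one kernel-verified Lean document; each statement's English description precedes it below -/
import Mathlib

section
/- Every connected geometric graph in the plane has a spanning tree of maximum degree at most five. -/
/-
Take a spanning tree of minimum total length, ties broken by the sum over its edges of the
first coordinates of both endpoints (a lexicographic weight). If `u` has two tree neighbours `v`
and `x`, then exchanging the edge `ux` for `vx` shows `|ux| ≤ |vx|`, with equality only if `u`
lies weakly left of `v` (if `vx` is not an edge, `|vx| > r ≥ |ux|` anyway). So any two
neighbours of `u` are at least `π/3` apart as seen from `u`.
Six such directions are then exactly `π/3` apart, consecutive neighbours form equilateral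
triangles with `u`, and the tie-break puts the first and the last of them (in angular order) in
the closed right half-plane at `u`, which is impossible for two directions `5π/3` apart.
-/

/-- The geometric graph on a finite point set `V ⊆ ℝ²`: two distinct points are
adjacent iff their Euclidean distance is at most `r`. -/
def geomGraph (V : Finset (EuclideanSpace ℝ (Fin 2))) (r : ℝ) : SimpleGraph V where
  Adj u v := u ≠ v ∧ dist (u : EuclideanSpace ℝ (Fin 2)) (v : EuclideanSpace ℝ (Fin 2)) ≤ r
  symm := ⟨fun u v h => ⟨h.1.symm, by rw [dist_comm]; exact h.2⟩⟩
  loopless := ⟨fun v h => h.1 rfl⟩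

open Real

local notation "ℝ²" => EuclideanSpace ℝ (Fin 2)

namespace SimpleGraph

variable {V : Type*} {G T T' : SimpleGraph V}

theorem Connected.sup_edge_deleteEdges_of_adj (hT : T.Connected) {u v x : V} (huv : T.Adj u v)
    (hvx : v ≠ x) :
    ((T ⊔ edge v x).deleteEdges {s(u, x)}).Connected := by
  refine (hT.mono le_sup_left).connected_delete_edge_of_not_isBridge ?_
  rw [isBridge_iff, not_not]
  have huv' : ((T ⊔ edge v x).deleteEdges {s(u, x)}).Adj u v := by
    simp [huv, edge_adj, hvx, huv.ne']
  have hvx' : ((T ⊔ edge v x).deleteEdges {s(u, x)}).Adj v x := by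
    simp [edge_adj, hvx, huv.ne']
  exact huv'.reachable.trans hvx'.reachable

section EdgeWeight

variable [Finite V] {Γ : Type*} [AddCommGroup Γ]

noncomputable def edgeWeight (w : Sym2 V → Γ) (T : SimpleGraph V) : Γ :=
  ∑ e ∈ T.edgeSet.toFinite.toFinset, w e

theorem edgeWeight_eq_sum (w : Sym2 V → Γ) {s : Finset (Sym2 V)}
    (hs : (s : Set (Sym2 V)) = T.edgeSet) : edgeWeight w T = ∑ e ∈ s, w e := by
  rw [edgeWeight]
  congr
  ext
  simp [← hs]

theorem edgeWeight_sup_edge (w : Sym2 V → Γ) {v x : V} (hvx : v ≠ x) (h : ¬T.Adj v x) :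
    edgeWeight w (T ⊔ edge v x) = edgeWeight w T + w s(v, x) := by
  classical
  rw [edgeWeight_eq_sum w (s := insert s(v, x) T.edgeSet.toFinite.toFinset), Finset.sum_insert,
    add_comm, edgeWeight]
  · simpa using h
  · rw [Finset.coe_insert, Set.Finite.coe_toFinset, edgeSet_sup, edgeSet_edge_of_ne hvx,
      Set.union_singleton]

theorem edgeWeight_deleteEdges_singleton (w : Sym2 V → Γ) {e : Sym2 V} (he : e ∈ T.edgeSet) :
    edgeWeight w (T.deleteEdges {e}) = edgeWeight w T - w e := by
  classical
  rw [edgeWeight_eq_sum w (s := T.edgeSet.toFinite.toFinset.erase e), eq_sub_iff_add_eq,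
    Finset.sum_erase_add _ _ (by simpa using he), edgeWeight]
  rw [Finset.coe_erase, Set.Finite.coe_toFinset, edgeSet_deleteEdges]

variable [LinearOrder Γ] [IsOrderedAddMonoid Γ]

theorem edgeWeight_lt_edgeWeight (w : Sym2 V → Γ) (hw : ∀ e ∈ T.edgeSet, 0 < w e) (h : T' < T) :
    edgeWeight w T' < edgeWeight w T := by
  obtain ⟨e, heT, heT'⟩ := Set.exists_of_ssubset (edgeSet_ssubset_edgeSet.2 h)
  exact Finset.sum_lt_sum_of_subset (Set.Finite.toFinset_subset_toFinset.2 (edgeSet_mono h.le))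
    (by simpa using heT) (by simpa using heT') (hw e heT)
    fun e he _ => (hw e (by simpa using he)).le

theorem Connected.exists_isTree_le_forall_exchange (hG : G.Connected) (w : Sym2 V → Γ)
    (hw : ∀ e ∈ G.edgeSet, 0 < w e) :
    ∃ T ≤ G, T.IsTree ∧ ∀ ⦃u v x⦄, T.Adj u v → T.Adj u x → v ≠ x → G.Adj v x →
      w s(u, x) ≤ w s(v, x) := by
  classical
  obtain ⟨T, ⟨hTG, hT⟩, hmin⟩ :=
    Set.exists_min_image {T | T ≤ G ∧ T.Connected} (edgeWeight w) (Set.toFinite _) ⟨G, le_rfl, hG⟩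
  have hTtree : T.IsTree := by
    refine isTree_of_minimal_connected ⟨hT, fun T' hT' hle => ?_⟩
    by_contra hTT'
    exact (hmin T' ⟨hle.trans hTG, hT'⟩).not_gt
      (edgeWeight_lt_edgeWeight w (fun e he => hw e (edgeSet_mono hTG he)) (hle.lt_of_not_ge hTT'))
  refine ⟨T, hTG, hTtree, fun u v x huv hux hvx hGvx => ?_⟩
  have hTvx : ¬T.Adj v x := fun h =>
    hTtree.isAcyclic.cliqueFree le_rfl {u, v, x} (is3Clique_triple_iff.2 ⟨huv, hux, h⟩)
  have hle := hmin _ ⟨(deleteEdges_le _).trans (sup_le hTG ((edge_le_iff G).2 (.inr hGvx))),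
    hT.sup_edge_deleteEdges_of_adj huv hvx⟩
  rw [edgeWeight_deleteEdges_singleton w (by simp [hux]), edgeWeight_sup_edge w hvx hTvx] at hle
  rwa [add_sub_assoc, le_add_iff_nonneg_right, sub_nonneg] at hle

end EdgeWeight

end SimpleGraph

theorem Real.pi_div_three_le_abs_of_cos_le_half {t : ℝ} (ht : |t| < 2 * π)
    (hc : Real.cos t ≤ 1 / 2) : π / 3 ≤ |t| ∧ |t| ≤ 5 * (π / 3) := by
  rw [← Real.cos_abs] at hc
  constructor
  · by_contra! h
    have := Real.cos_lt_cos_of_nonneg_of_le_pi (abs_nonneg t) (by linarith [pi_pos]) h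
    rw [Real.cos_pi_div_three] at this
    linarith
  · by_contra! h
    have := Real.cos_lt_cos_of_nonneg_of_le_pi (by linarith) (by linarith [pi_pos])
      (show 2 * π - |t| < π / 3 by linarith)
    rw [Real.cos_pi_div_three, Real.cos_two_pi_sub] at this
    linarith

theorem exists_perm_eq_add_mul_of_le_abs_sub {n : ℕ} (θ : Fin (n + 1) → ℝ) {δ : ℝ}
    (hsep : ∀ i j, i ≠ j → δ ≤ |θ i - θ j|) (hspan : ∀ i j, θ i - θ j ≤ n * δ) :
    ∃ σ : Equiv.Perm (Fin (n + 1)), ∀ k, θ (σ k) = θ (σ 0) + k * δ := by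
  set σ := Tuple.sort θ
  have hgap (k : Fin n) : θ (σ k.castSucc) + δ ≤ θ (σ k.succ) := by
    have hle : θ (σ k.castSucc) ≤ θ (σ k.succ) :=
      Tuple.monotone_sort θ (Fin.castSucc_le_succ k)
    have := hsep _ _ (σ.injective.ne (Fin.castSucc_lt_succ (i := k)).ne')
    rw [abs_of_nonneg (sub_nonneg.2 hle)] at this
    linarith
  set g : Fin (n + 1) → ℝ := fun k => θ (σ k) - k * δ
  have hg : Monotone g := Fin.monotone_iff_le_succ.2 fun k => by
    simp only [g, Fin.val_succ, Fin.val_castSucc, Nat.cast_add, Nat.cast_one]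
    linarith [hgap k]
  refine ⟨σ, fun k => ?_⟩
  have h0k : g 0 ≤ g k := hg (Fin.zero_le k)
  have hkl : g k ≤ g (Fin.last n) := hg (Fin.le_last k)
  have hl0 : g (Fin.last n) ≤ g 0 := by
    simp only [g, Fin.val_last, Fin.val_zero, Nat.cast_zero, zero_mul, sub_zero]
    linarith [hspan (σ (Fin.last n)) (σ 0)]
  simp only [g, Fin.val_zero, Nat.cast_zero, zero_mul, sub_zero] at h0k hkl hl0
  linarith

namespace Complex

theorem norm_sub_sq_eq_sub_cos_arg_sub (z w : ℂ) :
    ‖z - w‖ ^ 2 = ‖z‖ ^ 2 + ‖w‖ ^ 2 - 2 * ‖z‖ * ‖w‖ * Real.cos (arg z - arg w) := by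
  rw [Complex.sq_norm, normSq_apply, sub_re, sub_im,
    ← norm_mul_cos_arg z, ← norm_mul_sin_arg z, ← norm_mul_cos_arg w, ← norm_mul_sin_arg w,
    Real.cos_sub]
  linear_combination
    ‖z‖ ^ 2 * Real.sin_sq_add_cos_sq (arg z) + ‖w‖ ^ 2 * Real.sin_sq_add_cos_sq (arg w)

theorem abs_arg_sub_lt_two_pi (z w : ℂ) : |arg z - arg w| < 2 * π := by
  rw [abs_lt]
  constructor <;> linarith [neg_pi_lt_arg z, arg_le_pi z, neg_pi_lt_arg w, arg_le_pi w]

theorem cos_arg_sub_le_half {z w : ℂ} (hz : z ≠ 0) (hw : w ≠ 0) (hzd : ‖z‖ ≤ ‖z - w‖)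
    (hwd : ‖w‖ ≤ ‖z - w‖) : Real.cos (arg z - arg w) ≤ 1 / 2 := by
  have hcos := norm_sub_sq_eq_sub_cos_arg_sub z w
  have hz' := norm_pos_iff.2 hz
  have hw' := norm_pos_iff.2 hw
  by_contra! hc
  have : 0 < ‖z‖ * ‖w‖ * (2 * Real.cos (arg z - arg w) - 1) :=
    mul_pos (mul_pos hz' hw') (by linarith)
  nlinarith [mul_self_le_mul_self (norm_nonneg _) hzd, mul_self_le_mul_self (norm_nonneg _) hwd]

theorem norm_sub_eq_of_abs_arg_sub_eq_pi_div_three {z w : ℂ} (hz : z ≠ 0)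
    (hw : w ≠ 0) (hzd : ‖z‖ ≤ ‖z - w‖) (hwd : ‖w‖ ≤ ‖z - w‖) (harg : |arg z - arg w| = π / 3) : ‖z - w‖ = ‖w‖ := by
  have hcos := norm_sub_sq_eq_sub_cos_arg_sub z w
  rw [← Real.cos_abs, harg, Real.cos_pi_div_three] at hcos
  have hz' := norm_pos_iff.2 hz
  have hw' := norm_pos_iff.2 hw
  have hzw : ‖z‖ = ‖w‖ := by
    apply le_antisymm
    · nlinarith [mul_self_le_mul_self (norm_nonneg _) hzd]
    · nlinarith [mul_self_le_mul_self (norm_nonneg _) hwd]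
  rw [hzw] at hcos
  nlinarith [norm_nonneg (z - w), norm_nonneg w]

end Complex

theorem Set.exists_injective_fin_of_le_ncard {α : Type*} {S : Set α} {n : ℕ}
    (hn : n ≤ S.ncard) : ∃ f : Fin n → α, Function.Injective f ∧ ∀ i, f i ∈ S := by
  obtain rfl | hpos := n.eq_zero_or_pos
  · exact ⟨Fin.elim0, fun i => i.elim0, fun i => i.elim0⟩
  obtain ⟨t, htS, ht⟩ := Set.exists_subset_card_eq hn
  have : Finite t := Set.finite_of_ncard_pos (ht ▸ hpos)
  let e := Finite.equivFinOfCardEq (α := t) (by rw [Nat.card_coe_set_eq, ht])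
  exact ⟨fun i => e.symm i, Subtype.val_injective.comp e.symm.injective,
    fun i => htS (e.symm i).2⟩

theorem Complex.ncard_le_five_of_norm_le_norm_sub (S : Set ℂ) (h0 : (0 : ℂ) ∉ S)
    (hle : ∀ z ∈ S, ∀ w ∈ S, z ≠ w → ‖w‖ ≤ ‖z - w‖)
    (heq : ∀ z ∈ S, ∀ w ∈ S, z ≠ w → ‖z - w‖ = ‖w‖ → 0 ≤ z.re) : S.ncard ≤ 5 := by
  by_contra! h6
  obtain ⟨z, hz, hzS⟩ := Set.exists_injective_fin_of_le_ncard (n := 6) h6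
  have hz0 (i) : z i ≠ 0 := fun h => h0 (h ▸ hzS i)
  have hle' {i j} (hij : i ≠ j) : ‖z j‖ ≤ ‖z i - z j‖ :=
    hle _ (hzS i) _ (hzS j) (hz.ne hij)
  have hle'' {i j} (hij : i ≠ j) : ‖z i‖ ≤ ‖z i - z j‖ :=
    norm_sub_rev (z i) _ ▸ hle' hij.symm
  have hsep {i j} (hij : i ≠ j) :=
    Real.pi_div_three_le_abs_of_cos_le_half (abs_arg_sub_lt_two_pi (z i) (z j))
      (cos_arg_sub_le_half (hz0 i) (hz0 j) (hle'' hij) (hle' hij))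
  have hre {i j} (hij : i ≠ j) (harg : |arg (z i) - arg (z j)| = π / 3) : 0 ≤ (z i).re :=
    heq _ (hzS i) _ (hzS j) (hz.ne hij)
      (norm_sub_eq_of_abs_arg_sub_eq_pi_div_three (hz0 i) (hz0 j) (hle'' hij) (hle' hij) harg)
  obtain ⟨σ, hσ⟩ := exists_perm_eq_add_mul_of_le_abs_sub (fun i => arg (z i)) (δ := π / 3)
    (fun i j hij => (hsep hij).1) fun i j => by
      by_cases hij : i = j
      · simp only [hij, sub_self]; positivity
      · exact (le_abs_self _).trans (hsep hij).2
  have h1 := hσ 1; have h4 := hσ 4; have h5 := hσ 5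
  norm_num at h1 h4 h5
  have hre0 := hre (σ.injective.ne (by decide : (0 : Fin 6) ≠ 1)) (by
    rw [h1, abs_sub_comm]; ring_nf; exact abs_of_pos (by positivity))
  have hre5 := hre (σ.injective.ne (by decide : (5 : Fin 6) ≠ 4)) (by
    rw [h4, h5]; ring_nf; exact abs_of_pos (by positivity))
  have := abs_le.1 (abs_arg_le_pi_div_two_iff.2 hre0)
  have := abs_le.1 (abs_arg_le_pi_div_two_iff.2 hre5)
  linarith [pi_pos]

theorem EuclideanSpace.ncard_le_five_of_norm_le_norm_sub (S : Set ℝ²)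
    (h0 : 0 ∉ S) (hle : ∀ x ∈ S, ∀ y ∈ S, x ≠ y → ‖y‖ ≤ ‖x - y‖)
    (heq : ∀ x ∈ S, ∀ y ∈ S, x ≠ y → ‖x - y‖ = ‖y‖ → 0 ≤ x 0) : S.ncard ≤ 5 := by
  set e := Complex.orthonormalBasisOneI.repr.symm
  rw [← Set.ncard_image_of_injective S e.injective]
  apply Complex.ncard_le_five_of_norm_le_norm_sub
  · rintro ⟨x, hx, hx0⟩
    exact h0 (e.map_eq_zero_iff.1 hx0 ▸ hx)
  · rintro _ ⟨x, hx, rfl⟩ _ ⟨y, hy, rfl⟩ hxy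
    rw [← map_sub, e.norm_map, e.norm_map]
    exact hle x hx y hy (ne_of_apply_ne e hxy)
  · rintro _ ⟨x, hx, rfl⟩ _ ⟨y, hy, rfl⟩ hxy h
    rw [← map_sub, e.norm_map, e.norm_map] at h
    simpa [e] using heq x hx y hy (ne_of_apply_ne e hxy) h

noncomputable def lengthLexWeight {X : Type*} [PseudoMetricSpace X] (f : X → ℝ) :
    Sym2 X → ℝ ×ₗ ℝ :=
  Sym2.lift ⟨fun a b => toLex (dist a b, f a + f b), fun a b => by
    simp only [dist_comm, add_comm]⟩

section LengthLexWeight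

variable {X : Type*} (f : X → ℝ)

theorem lengthLexWeight_pos [MetricSpace X] {a b : X} (hab : a ≠ b) :
    0 < lengthLexWeight f s(a, b) :=
  Prod.Lex.toLex_lt_toLex.2 (.inl (dist_pos.2 hab))

theorem lengthLexWeight_le_iff [PseudoMetricSpace X] {a b c d : X} :
    lengthLexWeight f s(a, b) ≤ lengthLexWeight f s(c, d) ↔
      dist a b < dist c d ∨ dist a b = dist c d ∧ f a + f b ≤ f c + f d :=
  Prod.Lex.toLex_le_toLex

end LengthLexWeight

theorem dist_le_dist_of_lengthLexWeight_le {V : Finset ℝ²} {r : ℝ} {T : SimpleGraph V}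
    (hTG : T ≤ geomGraph V r) (f : V → ℝ) {u v x : V} (hux : T.Adj u x) (hvx : v ≠ x)
    (hexch : (geomGraph V r).Adj v x → lengthLexWeight f s(u, x) ≤ lengthLexWeight f s(v, x)) :
    dist u x ≤ dist v x ∧ (dist v x = dist u x → f u ≤ f v) := by
  by_cases hvx' : dist v x ≤ r
  · rcases (lengthLexWeight_le_iff f).1 (hexch ⟨hvx, hvx'⟩) with h | ⟨h, hf⟩
    · exact ⟨h.le, fun h' => absurd h' h.ne'⟩
    · exact ⟨h.le, fun _ => by linarith⟩
  · have := (hTG hux).2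
    exact ⟨by linarith [Subtype.dist_eq u x], fun h => by linarith [Subtype.dist_eq u x]⟩

/-- Every connected geometric graph in the plane has a spanning tree of maximum
degree at most five. -/
theorem geomGraph_spanning_tree (V : Finset (EuclideanSpace ℝ (Fin 2))) (r : ℝ)
    (hconn : (geomGraph V r).Connected) :
    ∃ T : SimpleGraph V, T ≤ geomGraph V r ∧ T.IsTree ∧
      ∀ v : V, {w | T.Adj v w}.ncard ≤ 5 := by
  set f : V → ℝ := fun p => (p : ℝ²) 0
  obtain ⟨T, hTG, hT, hexch⟩ := hconn.exists_isTree_le_forall_exchange (lengthLexWeight f)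
    fun e he => by induction e with | h a b => exact lengthLexWeight_pos f he.1
  refine ⟨T, hTG, hT, fun u => ?_⟩
  have hinj : Function.Injective fun v : V => (v : ℝ²) - u :=
    sub_left_injective.comp Subtype.val_injective
  rw [← Set.ncard_image_of_injective _ hinj]
  apply EuclideanSpace.ncard_le_five_of_norm_le_norm_sub
  · rintro ⟨v, huv, hv0⟩
    exact huv.ne (hinj (hv0.trans (sub_self _).symm)).symm
  all_goals
    rintro _ ⟨v, huv, rfl⟩ _ ⟨x, hux, rfl⟩ hvx
    have hvx : v ≠ x := fun h => hvx (h ▸ rfl)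
    obtain ⟨hle, heq⟩ := dist_le_dist_of_lengthLexWeight_le hTG f hux hvx (hexch huv hux hvx)
    simp only [sub_sub_sub_cancel_right, ← dist_eq_norm, dist_comm _ (u : ℝ²)]
  exacts [hle, fun h => by simpa [f] using heq h]
end

section
/- For every finite connected graph G and every positive integer s, the acquaintance time of the lexicographic product G[K_s] is at most the acquaintance time of G: AC(G[K_s]) ≤ AC(G). -/
/-- A single round of the acquaintance process: agents are swapped along a
matching of `G`. The permutation `σ` is an involution and moves agents only
along edges of `G`. -/
def IsMatchingStep {V : Type*} (G : SimpleGraph V) (σ : Equiv.Perm V) : Prop :=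
  (∀ v, σ (σ v) = v) ∧ ∀ v, σ v = v ∨ G.Adj v (σ v)

/-- A strategy: `f t` gives the position of each agent (indexed by its initial
vertex) after `t` rounds; consecutive configurations differ by a matching swap. -/
def IsSchedule {V : Type*} (G : SimpleGraph V) (f : ℕ → Equiv.Perm V) : Prop :=
  f 0 = 1 ∧ ∀ t, IsMatchingStep G (f (t + 1) * (f t)⁻¹)

/-- After `k` rounds of strategy `f`, every pair of distinct agents has been
acquainted, i.e. has simultaneously occupied adjacent vertices. -/
def Acquaints {V : Type*} (G : SimpleGraph V) (f : ℕ → Equiv.Perm V) (k : ℕ) : Prop :=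
  ∀ a b : V, a ≠ b → ∃ t ≤ k, G.Adj (f t a) (f t b)

/-- The acquaintance time of `G`. -/
noncomputable def acqTime {V : Type*} (G : SimpleGraph V) : ℕ :=
  sInf {k | ∃ f, IsSchedule G f ∧ Acquaints G f k}


/-- The lexicographic product `G[K_s]`: each vertex of `G` is replaced by an
`s`-clique, with all edges between cliques of adjacent vertices. -/
def lexClique {V : Type*} (G : SimpleGraph V) (s : ℕ) : SimpleGraph (V × Fin s) where
  Adj x y := G.Adj x.1 y.1 ∨ (x.1 = y.1 ∧ x.2 ≠ y.2)
  symm := ⟨fun x y h => h.elim (fun h => Or.inl h.symm)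
    (fun h => Or.inr ⟨h.1.symm, h.2.symm⟩)⟩
  loopless := ⟨fun x h => h.elim (fun h => G.loopless.irrefl _ h) (fun h => h.2 rfl)⟩


/-!
Moving each clique of `G[K_s]` as a block along an optimal strategy for `G` acquaints two agents
of different cliques whenever their projections to `G` meet, while agents sharing a clique are
adjacent from the start. What needs proof is that `AC(G)` is attained, i.e. that some strategy
acquaints everybody: in a connected graph any two agents meet if one walks towards the other,
swapping along the way, and such runs can be concatenated over all pairs.
-/

section

variable {V : Type*} {G : SimpleGraph V}

def IsRun (G : SimpleGraph V) (g : ℕ → Equiv.Perm V) : Prop :=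
  ∀ t, IsMatchingStep G (g (t + 1) * (g t)⁻¹)

lemma isMatchingStep_one : IsMatchingStep G 1 :=
  ⟨fun _ => rfl, fun _ => Or.inl rfl⟩

lemma isMatchingStep_swap [DecidableEq V] {u v : V} (h : G.Adj u v) :
    IsMatchingStep G (Equiv.swap u v) := by
  refine ⟨Equiv.swap_apply_self u v, fun w => ?_⟩
  rcases eq_or_ne w u with rfl | hu
  · simpa using Or.inr h
  rcases eq_or_ne w v with rfl | hv
  · simpa using Or.inr h.symm
  · exact Or.inl (Equiv.swap_apply_of_ne_of_ne hu hv)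

lemma isRun_const (p : Equiv.Perm V) : IsRun G fun _ => p := fun _ => by
  simpa using isMatchingStep_one

def splice (g : ℕ → Equiv.Perm V) (n : ℕ) (h : ℕ → Equiv.Perm V) : ℕ → Equiv.Perm V :=
  fun t => if t < n then g t else h (t - n)

section splice

variable {g h : ℕ → Equiv.Perm V} {n : ℕ}

lemma splice_add (t : ℕ) : splice g n h (n + t) = h t := by
  simp [splice]

lemma splice_zero (hgh : g n = h 0) : splice g n h 0 = g 0 := by
  rcases n.eq_zero_or_pos with rfl | hn
  · simp [splice, hgh]
  · simp [splice, hn]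

lemma IsRun.splice (hg : IsRun G g) (hh : IsRun G h) (hgh : g n = h 0) :
    IsRun G (splice g n h) := by
  intro t
  rcases lt_trichotomy (t + 1) n with ht | ht | ht
  · simpa [_root_.splice, ht, (Nat.lt_succ_self t).trans ht] using hg t
  · simpa [_root_.splice, ht, ← hgh, show t < n by omega] using hg t
  · obtain ⟨u, rfl⟩ := Nat.exists_eq_add_of_le (Nat.le_of_lt_succ ht)
    simpa [add_assoc, splice_add] using hh u

end splice

lemma exists_isRun_adj_of_walk {a b : V} (hab : a ≠ b) {x y : V} (W : G.Walk x y)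
    (p : Equiv.Perm V) (hx : p a = x) (hy : p b = y) :
    ∃ g n, g 0 = p ∧ IsRun G g ∧ G.Adj (g n a) (g n b) := by
  classical
  induction W generalizing p with
  | nil => exact absurd (hx.trans hy.symm) (p.injective.ne hab)
  | @cons x c y hxc W ih =>
    by_cases hcy : c = y
    · exact ⟨fun _ => p, 0, rfl, isRun_const p, by rw [hx, hy, ← hcy]; exact hxc⟩
    have hxy : x ≠ y := hx ▸ hy ▸ p.injective.ne hab
    -- `a` steps from `x` to `c`, trading places with whoever sits at `c`; `b` stays at `y`.
    obtain ⟨g, n, hg0, hg, hadj⟩ := ih (Equiv.swap x c * p)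
      (by simp [hx]) (by simp [hy, Equiv.swap_apply_of_ne_of_ne (Ne.symm hxy) (Ne.symm hcy)])
    refine ⟨splice (fun t => if t = 0 then p else g 0) 1 g, 1 + n, rfl,
      IsRun.splice (fun t => ?_) hg rfl, by rwa [splice_add]⟩
    rcases t with _ | t
    · simpa [hg0, mul_assoc] using isMatchingStep_swap hxc
    · simpa using isMatchingStep_one

lemma exists_isRun_adj (hG : G.Preconnected) (p : Equiv.Perm V) {a b : V} (hab : a ≠ b) :
    ∃ g n, g 0 = p ∧ IsRun G g ∧ G.Adj (g n a) (g n b) :=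
  exists_isRun_adj_of_walk hab (hG (p a) (p b)).some p rfl rfl

lemma exists_isRun_acquaints_finset (hG : G.Preconnected) (S : Finset (V × V))
    (p : Equiv.Perm V) :
    ∃ g n, g 0 = p ∧ IsRun G g ∧ ∀ x ∈ S, x.1 ≠ x.2 → ∃ t ≤ n, G.Adj (g t x.1) (g t x.2) := by
  induction S using Finset.cons_induction generalizing p with
  | empty => exact ⟨fun _ => p, 0, rfl, isRun_const p, by simp⟩
  | cons x S _ ih =>
    by_cases hx : x.1 = x.2
    · obtain ⟨g, n, hg0, hg, hS⟩ := ih p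
      exact ⟨g, n, hg0, hg, by simpa [hx] using hS⟩
    obtain ⟨g, m, hg0, hg, hgx⟩ := exists_isRun_adj hG p hx
    obtain ⟨h, n, hh0, hh, hS⟩ := ih (g m)
    refine ⟨splice g m h, m + n, by rw [splice_zero hh0.symm, hg0], hg.splice hh hh0.symm, ?_⟩
    rintro y hy hy'
    rcases Finset.mem_cons.mp hy with rfl | hy
    · exact ⟨m, by omega, by simpa [splice, hh0] using hgx⟩
    · obtain ⟨t, ht, hadj⟩ := hS y hy hy'
      exact ⟨m + t, by omega, by rwa [splice_add]⟩

lemma acqTime_spec [Finite V] (hG : G.Preconnected) :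
    ∃ f, IsSchedule G f ∧ Acquaints G f (acqTime G) := by
  have := Fintype.ofFinite V
  refine Nat.sInf_mem (s := {k | ∃ f, IsSchedule G f ∧ Acquaints G f k}) ?_
  obtain ⟨f, n, hf0, hf, hS⟩ := exists_isRun_acquaints_finset hG Finset.univ 1
  exact ⟨n, f, ⟨hf0, hf⟩, fun a b hab => hS (a, b) (Finset.mem_univ _) hab⟩

section lexClique

variable {s : ℕ}

lemma IsMatchingStep.lexClique {σ : Equiv.Perm V} (hσ : IsMatchingStep G σ) :
    IsMatchingStep (lexClique G s) (σ.prodCongr (Equiv.refl _)) :=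
  ⟨fun x => Prod.ext (hσ.1 x.1) rfl, fun x => (hσ.2 x.1).imp (fun h => Prod.ext h rfl) Or.inl⟩

lemma IsSchedule.lexClique {f : ℕ → Equiv.Perm V} (hf : IsSchedule G f) :
    IsSchedule (lexClique G s) fun t => (f t).prodCongr (Equiv.refl _) := by
  refine ⟨by ext <;> simp [hf.1], fun t => ?_⟩
  convert (hf.2 t).lexClique (s := s) using 1
  ext <;> simp

lemma Acquaints.lexClique {f : ℕ → Equiv.Perm V} {k : ℕ} (hf : Acquaints G f k) :
    Acquaints (lexClique G s) (fun t => (f t).prodCongr (Equiv.refl _)) k := by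
  rintro ⟨a, i⟩ ⟨b, j⟩ hne
  by_cases hab : a = b
  · subst hab
    exact ⟨0, k.zero_le, Or.inr ⟨rfl, fun hij => hne (Prod.ext rfl hij)⟩⟩
  · obtain ⟨t, ht, hadj⟩ := hf a b hab
    exact ⟨t, ht, Or.inl hadj⟩

end lexClique

end

theorem acqTime_lexClique_le_general {V : Type*} [Fintype V] (G : SimpleGraph V)
    (hG : G.Connected) (s : ℕ) :
    acqTime (lexClique G s) ≤ acqTime G := by
  obtain ⟨f, hf, hacq⟩ := acqTime_spec hG.preconnected
  exact Nat.sInf_le ⟨_, hf.lexClique, hacq.lexClique⟩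

/-- `AC(G[K_s]) ≤ AC(G)` for every finite connected graph `G` and `s ≥ 1`. -/
theorem acqTime_lexClique_le {V : Type*} [Fintype V] (G : SimpleGraph V)
    (hG : G.Connected) (s : ℕ) (hs : 0 < s) :
    acqTime (lexClique G s) ≤ acqTime G :=
  acqTime_lexClique_le_general G hG s
end

section
/- Let G be a graph on n vertices that contains a Hamiltonian path. Then there exists a strategy of at most 2n rounds in which every pair of agents becomes acquainted and, moreover, each agent visits every vertex of G. -/
open SimpleGraph

section Transport

variable {V W : Type*} {G : SimpleGraph V} {H : SimpleGraph W}

lemma isMatchingStep_mul_inv {p q : Equiv.Perm W} (hswap : ∀ i j, p j = q i → q j = p i)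
    (hmove : ∀ i, q i = p i ∨ H.Adj (p i) (q i)) : IsMatchingStep H (q * p⁻¹) := by
  refine ⟨fun v => ?_, fun v => ?_⟩
  · simp only [Equiv.Perm.mul_apply]
    rw [hswap (p⁻¹ v) (p⁻¹ (q (p⁻¹ v))) (p.apply_symm_apply _)]
    exact p.apply_symm_apply v
  · simpa using hmove (p⁻¹ v)

variable (e : W ≃ V) (he : ∀ ⦃a b⦄, H.Adj a b → G.Adj (e a) (e b))
include he

lemma IsMatchingStep.permCongr {σ : Equiv.Perm W} (hσ : IsMatchingStep H σ) :
    IsMatchingStep G (e.permCongr σ) := by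
  refine ⟨fun v => by simp [hσ.1], fun v => ?_⟩
  rcases hσ.2 (e.symm v) with h | h
  · left; simp [h]
  · right; simpa using he h

lemma IsSchedule.permCongr {f : ℕ → Equiv.Perm W} (hf : IsSchedule H f) :
    IsSchedule G fun t => e.permCongr (f t) := by
  refine ⟨show e.permCongrHom (f 0) = 1 by rw [hf.1, map_one], fun t => ?_⟩
  show IsMatchingStep G (e.permCongrHom (f (t + 1)) * (e.permCongrHom (f t))⁻¹)
  rw [← map_inv, ← map_mul]
  exact (hf.2 t).permCongr e he

lemma Acquaints.permCongr {f : ℕ → Equiv.Perm W} {k : ℕ} (hf : Acquaints H f k) :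
    Acquaints G (fun t => e.permCongr (f t)) k := by
  intro a b hab
  obtain ⟨t, ht, h⟩ := hf (e.symm a) (e.symm b) (e.symm.injective.ne hab)
  exact ⟨t, ht, he h⟩

end Transport

lemma Acquaints.mono {V : Type*} {G : SimpleGraph V} {f : ℕ → Equiv.Perm V} {k l : ℕ}
    (hf : Acquaints G f k) (hkl : k ≤ l) : Acquaints G f l := by
  intro a b hab
  obtain ⟨t, ht, h⟩ := hf a b hab
  exact ⟨t, ht.trans hkl, h⟩

lemma SimpleGraph.Walk.adj_getVert_of_pathGraph_adj {V : Type*} {G : SimpleGraph V} {u v : V}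
    (p : G.Walk u v) {i j : Fin p.support.length} (h : (pathGraph _).Adj i j) :
    G.Adj (p.getVert i) (p.getVert j) := by
  have hi : (i : ℕ) < p.length + 1 := i.2.trans_eq p.length_support
  have hj : (j : ℕ) < p.length + 1 := j.2.trans_eq p.length_support
  rcases pathGraph_adj.mp h with h | h
  · rw [← h]; exact p.adj_getVert_succ (by omega)
  · rw [← h]; exact (p.adj_getVert_succ (by omega)).symm

namespace PathAcquaintance

/-- The vertex of the path `0, …, n-1` under slot `s` of the `2n`-cycle folded onto it. -/
def pathFold (n s : ℕ) : ℕ :=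
  if s % (2 * n) < n then s % (2 * n) else 2 * n - 1 - s % (2 * n)

variable {n : ℕ}

lemma pathFold_lt (hn : 0 < n) (s : ℕ) : pathFold n s < n := by
  unfold pathFold; split <;> omega

lemma pathFold_of_lt {s : ℕ} (hs : s < n) : pathFold n s = s := by
  rw [pathFold, Nat.mod_eq_of_lt (by omega), if_pos hs]

lemma add_add_one_modEq_zero_iff (hn : 0 < n) {x y : ℕ} :
    x + y + 1 ≡ 0 [MOD 2 * n] ↔ x % (2 * n) + y % (2 * n) + 1 = 2 * n := by
  have hx := Nat.mod_lt x (show 0 < 2 * n by omega)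
  have hy := Nat.mod_lt y (show 0 < 2 * n by omega)
  have hres : x % (2 * n) + y % (2 * n) + 1 ≡ x + y + 1 [MOD 2 * n] :=
    ((Nat.mod_modEq x _).add (Nat.mod_modEq y _)).add_right 1
  refine hres.congr_left.symm.trans (Nat.modEq_zero_iff_dvd.trans ⟨fun h => ?_, fun h => ⟨1, by omega⟩⟩)
  exact Nat.eq_of_dvd_of_lt_two_mul (by omega) h (by omega)

lemma pathFold_eq_pathFold_iff (hn : 0 < n) {x y : ℕ} :
    pathFold n x = pathFold n y ↔ x ≡ y [MOD 2 * n] ∨ x + y + 1 ≡ 0 [MOD 2 * n] := by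
  have hx := Nat.mod_lt x (show 0 < 2 * n by omega)
  have hy := Nat.mod_lt y (show 0 < 2 * n by omega)
  rw [add_add_one_modEq_zero_iff hn, Nat.ModEq]
  unfold pathFold
  split_ifs <;> omega

lemma modEq_of_pathFold_eq (hn : 0 < n) {x y : ℕ} (hxy : x ≡ y [MOD 2])
    (h : pathFold n x = pathFold n y) : x ≡ y [MOD 2 * n] := by
  refine ((pathFold_eq_pathFold_iff hn).mp h).resolve_right fun hodd => ?_
  have := hodd.of_mul_right n
  unfold Nat.ModEq at hxy this
  omega

lemma pathFold_succ_eq_or_adj (hn : 0 < n) (x : ℕ) :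
    pathFold n (x + 1) = pathFold n x ∨ pathFold n x + 1 = pathFold n (x + 1) ∨
      pathFold n (x + 1) + 1 = pathFold n x := by
  have hx := Nat.mod_lt x (show 0 < 2 * n by omega)
  have hsucc : (x + 1) % (2 * n) = if x % (2 * n) + 1 = 2 * n then 0 else x % (2 * n) + 1 := by
    rw [Nat.add_mod, Nat.mod_eq_of_lt (show 1 < 2 * n by omega)]
    split_ifs with h
    · rw [h, Nat.mod_self]
    · exact Nat.mod_eq_of_lt (by omega)
  unfold pathFold
  rw [hsucc]
  split_ifs <;> omega

lemma pathFold_succ_eq_of_pathFold_eq_pathFold_succ (hn : 0 < n) {x y : ℕ}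
    (hxy : x ≡ y [MOD 2]) (h : pathFold n y = pathFold n (x + 1)) :
    pathFold n (y + 1) = pathFold n x := by
  rcases (pathFold_eq_pathFold_iff hn).mp h with hsame | hrefl
  · have := hsame.of_mul_right n
    unfold Nat.ModEq at hxy this
    omega
  · exact (pathFold_eq_pathFold_iff hn).mpr (Or.inr (by convert hrefl using 1; ring))

lemma pathFold_add_two_mul (s : ℕ) : pathFold n (s + 2 * n) = pathFold n s := by
  simp only [pathFold, Nat.add_mod_right]

lemma exists_pathFold_adj {x y : ℕ} (hx : x < 2 * n) (hy : y < 2 * n) (hxy : x ≠ y)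
    (hpar : x ≡ y [MOD 2]) :
    ∃ t < n, pathFold n (x + t) + 1 = pathFold n (y + t) ∨
      pathFold n (y + t) + 1 = pathFold n (x + t) := by
  have hn : 0 < n := by omega
  obtain ⟨t, ht, hmirror⟩ : ∃ t < n, x + t + 1 + (y + t) + 1 ≡ 0 [MOD 2 * n] := by
    unfold Nat.ModEq at hpar
    rcases lt_or_ge ((x + y) / 2) n with h | h
    · exact ⟨n - 1 - (x + y) / 2, by omega, Nat.modEq_zero_iff_dvd.mpr ⟨1, by omega⟩⟩
    · exact ⟨2 * n - 1 - (x + y) / 2, by omega, Nat.modEq_zero_iff_dvd.mpr ⟨2, by omega⟩⟩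
  have hne : pathFold n (x + t) ≠ pathFold n (y + t) := fun h =>
    hxy (((modEq_of_pathFold_eq hn (hpar.add_right t) h).add_right_cancel' t).eq_of_lt_of_lt hx hy)
  have hmirror' : pathFold n (y + t) = pathFold n (x + t + 1) :=
    (pathFold_eq_pathFold_iff hn).mpr (Or.inr (by convert hmirror using 1; ring))
  refine ⟨t, ht, ?_⟩
  rcases pathFold_succ_eq_or_adj hn (x + t) with h | h | h <;> omega

lemma exists_pathFold_add_eq {x w : ℕ} (hx : x < 2 * n) (hw : w < n) :
    ∃ t < 2 * n, pathFold n (x + t) = w := by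
  rcases le_or_gt x w with h | h
  · exact ⟨w - x, by omega, by rw [Nat.add_sub_cancel' h, pathFold_of_lt hw]⟩
  · refine ⟨w + 2 * n - x, by omega, ?_⟩
    rw [show x + (w + 2 * n - x) = w + 2 * n by omega, pathFold_add_two_mul, pathFold_of_lt hw]

/-- Slots `i` and `2n - 1 - i` both lie over vertex `i`; agent `i` starts in the even one. -/
def startSlot (n i : ℕ) : ℕ := if i % 2 = 0 then i else 2 * n - 1 - i

variable {i : ℕ}

lemma startSlot_lt (hi : i < n) : startSlot n i < 2 * n := by
  unfold startSlot; split <;> omega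

lemma startSlot_modEq_zero (n i : ℕ) : startSlot n i ≡ 0 [MOD 2] := by
  unfold startSlot Nat.ModEq; split <;> omega

lemma pathFold_startSlot (hi : i < n) : pathFold n (startSlot n i) = i := by
  unfold startSlot
  split
  · exact pathFold_of_lt hi
  · rw [pathFold, Nat.mod_eq_of_lt (by omega), if_neg (by omega)]
    omega

lemma startSlot_add_modEq (n i j t : ℕ) :
    startSlot n i + t ≡ startSlot n j + t [MOD 2] :=
  ((startSlot_modEq_zero n i).trans (startSlot_modEq_zero n j).symm).add_right t

lemma startSlot_injective : Function.Injective fun i : Fin n => startSlot n i :=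
  fun i j h => Fin.ext <| by
    rw [← pathFold_startSlot i.2, ← pathFold_startSlot j.2]
    exact congrArg (pathFold n) h

def pathBounce (n t : ℕ) (i : Fin n) : Fin n :=
  ⟨pathFold n (startSlot n i + t), pathFold_lt i.pos _⟩

lemma pathBounce_injective (t : ℕ) : Function.Injective (pathBounce n t) := by
  intro i j h
  have hslot := (modEq_of_pathFold_eq i.pos (startSlot_add_modEq n i j t)
    (congrArg Fin.val h)).add_right_cancel' t
  exact startSlot_injective (hslot.eq_of_lt_of_lt (startSlot_lt i.2) (startSlot_lt j.2))

noncomputable def pathSchedule (n t : ℕ) : Equiv.Perm (Fin n) :=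
  Equiv.ofBijective _ (Finite.injective_iff_bijective.mp (pathBounce_injective (n := n) t))

lemma pathSchedule_zero : pathSchedule n 0 = 1 := by
  ext i
  exact pathFold_startSlot i.2

lemma isSchedule_pathSchedule (n : ℕ) : IsSchedule (pathGraph n) (pathSchedule n) := by
  refine ⟨pathSchedule_zero, fun t => isMatchingStep_mul_inv (fun i j h => ?_) (fun i => ?_)⟩
  · exact Fin.ext (pathFold_succ_eq_of_pathFold_eq_pathFold_succ i.pos
      (startSlot_add_modEq n i j t) (congrArg Fin.val h))
  · rw [pathGraph_adj, Fin.ext_iff]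
    exact pathFold_succ_eq_or_adj i.pos _

lemma acquaints_pathSchedule (n : ℕ) : Acquaints (pathGraph n) (pathSchedule n) n := by
  intro i j hij
  obtain ⟨t, ht, hadj⟩ := exists_pathFold_adj (startSlot_lt i.2) (startSlot_lt j.2)
    (startSlot_injective.ne hij) (startSlot_add_modEq n i j 0)
  exact ⟨t, ht.le, pathGraph_adj.mpr hadj⟩

lemma exists_pathSchedule_apply_eq (i w : Fin n) : ∃ t < 2 * n, pathSchedule n t i = w := by
  obtain ⟨t, ht, h⟩ := exists_pathFold_add_eq (startSlot_lt i.2) w.2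
  exact ⟨t, ht, Fin.ext h⟩

end PathAcquaintance

open PathAcquaintance in
/-- If `G` on `n` vertices has a Hamiltonian path, then there is a strategy of
at most `2n` rounds in which every pair of agents becomes acquainted and,
moreover, every agent visits every vertex. -/
theorem hamiltonian_path_strategy {V : Type*} [Fintype V] [DecidableEq V] (G : SimpleGraph V)
    (hpath : ∃ (u v : V) (p : G.Walk u v), p.IsHamiltonian) :
    ∃ f : ℕ → Equiv.Perm V, IsSchedule G f ∧
      Acquaints G f (2 * Fintype.card V) ∧
      ∀ a w : V, ∃ t ≤ 2 * Fintype.card V, f t a = w := by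
  obtain ⟨u, v, p, hp⟩ := hpath
  have he : ∀ ⦃i j⦄, (pathGraph _).Adj i j → G.Adj (hp.getVertEquiv i) (hp.getVertEquiv j) :=
    fun _ _ h => p.adj_getVert_of_pathGraph_adj h
  rw [← hp.length_support]
  refine ⟨fun t => hp.getVertEquiv.permCongr (pathSchedule _ t),
    (isSchedule_pathSchedule _).permCongr _ he,
    ((acquaints_pathSchedule _).mono (by omega)).permCongr _ he, fun a w => ?_⟩
  obtain ⟨t, ht, hw⟩ := exists_pathSchedule_apply_eq (hp.getVertEquiv.symm a)
    (hp.getVertEquiv.symm w)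
  exact ⟨t, ht.le, by rw [Equiv.permCongr_apply, hw, Equiv.apply_symm_apply]⟩
end

section
/- There exists a universal constant γ > 0 such that for all t ∈ ℕ and all 0 < p < 1, the random bipartite graph B(t,p) with parts X, Y of size t, where each pair (x,y) ∈ X × Y is an edge independently with probability p, contains a perfect matching with probability at least 1 − C·t·exp(−γ·t·p) for some universal constant C. -/
open MeasureTheory
open scoped ENNReal

/-- The Bernoulli measure with parameter `p` on `Bool`. -/
noncomputable def bern (p : ℝ) : Measure Bool :=
  ENNReal.ofReal p • Measure.dirac true + ENNReal.ofReal (1 - p) • Measure.dirac false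

instance (p : ℝ) : IsFiniteMeasure (bern p) where
  measure_univ_lt_top := by
    simp only [bern, Measure.add_apply, Measure.smul_apply, measure_univ, smul_eq_mul, mul_one]
    exact ENNReal.add_lt_top.mpr ⟨ENNReal.ofReal_lt_top, ENNReal.ofReal_lt_top⟩

/-- The random bipartite graph `B(t,p)` with parts `X = Y = Fin t`:
each pair `(x, y)` is an edge independently with probability `p`. -/
noncomputable def bipMeasure (t : ℕ) (p : ℝ) : Measure (Fin t × Fin t → Bool) :=
  Measure.pi fun _ => bern p

/-!
By Hall's theorem, if `B(t,p)` has no perfect matching then there are `S ⊆ X` and `T ⊆ Y` with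
`|T| = |S| - 1` and no edge between `S` and `Y \ T`; for `|S| = k` this has probability
`(1-p)^(k(t-k+1))`. With `m = min k (t+1-k)` there are at most `t^(2m)` such pairs, while
`k(t+1-k) ≥ m(t+1)/2`, so each `k` contributes at most `exp(-tp/8)` as soon as `t ≤ exp(tp/8)`.
Otherwise `t·exp(-tp/8) > 1` and the bound is trivial.
-/

open Finset

lemma isProbabilityMeasure_bern {p : ℝ} (h0 : 0 ≤ p) (h1 : p ≤ 1) :
    IsProbabilityMeasure (bern p) :=
  ⟨by simp [bern, ← ENNReal.ofReal_add h0 (sub_nonneg.2 h1)]⟩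

lemma pi_bern_forall_mem_eq_false {ι : Type*} [Fintype ι] {p : ℝ} (h0 : 0 ≤ p) (h1 : p ≤ 1)
    (F : Finset ι) :
    Measure.pi (fun _ : ι => bern p) {ω | ∀ i ∈ F, ω i = false} =
      ENNReal.ofReal ((1 - p) ^ #F) := by
  have := isProbabilityMeasure_bern h0 h1
  have hF : {ω : ι → Bool | ∀ i ∈ F, ω i = false} = (F : Set ι).pi fun _ => {false} := by
    ext; simp
  rw [hF, Measure.pi_pi_finset, prod_const, ENNReal.ofReal_pow (sub_nonneg.2 h1)]
  simp [bern]

lemma exists_hall_violator_of_not_exists_perm {α : Type*} [Fintype α] [DecidableEq α]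
    (r : α → α → Prop) [DecidableRel r] (h : ¬ ∃ σ : Equiv.Perm α, ∀ x, r x (σ x)) :
    ∃ S T : Finset α, #T + 1 = #S ∧ ∀ x ∈ S, ∀ y ∉ T, ¬ r x y := by
  obtain ⟨S, hS⟩ : ∃ S : Finset α, #{y | ∃ x ∈ S, r x y} < #S := by
    by_contra! hall
    obtain ⟨f, hf, hrf⟩ := (Fintype.all_card_le_filter_rel_iff_exists_injective r).1 hall
    exact h ⟨Equiv.ofBijective f hf.bijective_of_finite, hrf⟩
  obtain ⟨T, hNT, -, hT⟩ := exists_subsuperset_card_eq (subset_univ _) (Nat.le_sub_one_of_lt hS)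
    (by simpa using (Nat.sub_le _ 1).trans (card_le_univ S))
  refine ⟨S, T, by omega, fun x hx y hy hxy => hy (hNT ?_)⟩
  simpa using ⟨x, hx, hxy⟩

def perfectMatchingEvent (t : ℕ) : Set (Fin t × Fin t → Bool) :=
  {ω | ∃ σ : Equiv.Perm (Fin t), ∀ i, ω (i, σ i) = true}

def noEdgesBetween {t : ℕ} (S T : Finset (Fin t)) : Set (Fin t × Fin t → Bool) :=
  {ω | ∀ x ∈ S, ∀ y ∉ T, ω (x, y) = false}

lemma compl_perfectMatchingEvent_subset (t : ℕ) :
    (perfectMatchingEvent t)ᶜ ⊆ ⋃ k ∈ Icc 1 t, ⋃ S ∈ powersetCard k univ,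
      ⋃ T ∈ powersetCard (k - 1) univ, noEdgesBetween S T := by
  intro ω hω
  obtain ⟨S, T, hST, hS⟩ :=
    exists_hall_violator_of_not_exists_perm (fun x y => ω (x, y) = true) hω
  simp only [Set.mem_iUnion, mem_Icc, mem_powersetCard, exists_prop]
  refine ⟨#S, ⟨by omega, (card_le_univ S).trans_eq (Fintype.card_fin t)⟩, S,
    ⟨subset_univ S, rfl⟩, T, ⟨subset_univ T, by omega⟩, fun x hx y hy => ?_⟩
  simpa using hS x hx y hy

section

variable {t : ℕ} {p : ℝ}

lemma isProbabilityMeasure_bipMeasure (h0 : 0 ≤ p) (h1 : p ≤ 1) :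
    IsProbabilityMeasure (bipMeasure t p) :=
  have := isProbabilityMeasure_bern h0 h1
  Measure.pi.instIsProbabilityMeasure _

lemma bipMeasure_noEdgesBetween (h0 : 0 ≤ p) (h1 : p ≤ 1) (S T : Finset (Fin t)) :
    bipMeasure t p (noEdgesBetween S T) = ENNReal.ofReal ((1 - p) ^ (#S * (t - #T))) := by
  have hST : noEdgesBetween S T = {ω | ∀ i ∈ S ×ˢ Tᶜ, ω i = false} := by
    ext ω
    simp only [noEdgesBetween, Set.mem_ofPred_eq, mem_product, mem_compl, Prod.forall, and_imp]
    exact ⟨fun h x y hx hy => h x hx y hy, fun h x hx y hy => h x y hx hy⟩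
  rw [hST, bipMeasure, pi_bern_forall_mem_eq_false h0 h1, card_product, card_compl,
    Fintype.card_fin]

lemma bipMeasure_biUnion_noEdgesBetween_le (h0 : 0 ≤ p) (h1 : p ≤ 1) (k : ℕ) :
    bipMeasure t p (⋃ S ∈ powersetCard k univ, ⋃ T ∈ powersetCard (k - 1) univ,
      noEdgesBetween S T) ≤
      ENNReal.ofReal (t.choose k * t.choose (k - 1) * (1 - p) ^ (k * (t - (k - 1)))) := by
  calc _ ≤ ∑ S ∈ powersetCard k univ, ∑ T ∈ powersetCard (k - 1) univ,
          bipMeasure t p (noEdgesBetween S T) :=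
        (measure_biUnion_finset_le _ _).trans (sum_le_sum fun S _ => measure_biUnion_finset_le _ _)
    _ = ∑ S ∈ powersetCard k (univ : Finset (Fin t)), ∑ T ∈ powersetCard (k - 1)
          (univ : Finset (Fin t)), ENNReal.ofReal ((1 - p) ^ (k * (t - (k - 1)))) := by
        refine sum_congr rfl fun S hS => sum_congr rfl fun T hT => ?_
        rw [bipMeasure_noEdgesBetween h0 h1, (mem_powersetCard.1 hS).2, (mem_powersetCard.1 hT).2]
    _ = _ := by
        simp only [sum_const, card_powersetCard, card_univ, Fintype.card_fin, nsmul_eq_mul]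
        rw [ENNReal.ofReal_mul (by positivity), ENNReal.ofReal_mul (by positivity),
          ENNReal.ofReal_natCast, ENNReal.ofReal_natCast, mul_assoc]

end

lemma Nat.choose_le_pow_of_min_le {n r m : ℕ} (hn : 1 ≤ n) (h : min r (n - r) ≤ m) :
    n.choose r ≤ n ^ m := by
  refine le_trans ?_ (Nat.pow_le_pow_right hn h)
  rcases le_total r (n - r) with hr | hr
  · rw [min_eq_left hr]; exact Nat.choose_le_pow n r
  · rw [min_eq_right hr]
    rcases le_or_gt r n with hrn | hrn
    · rw [← Nat.choose_symm hrn]; exact Nat.choose_le_pow _ _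
    · simp [Nat.choose_eq_zero_of_lt hrn]

open Real in
lemma choose_mul_choose_mul_pow_le {t k : ℕ} {p : ℝ} (h0 : 0 ≤ p) (h1 : p ≤ 1) (hk : 1 ≤ k)
    (hkt : k ≤ t) (ht : (t : ℝ) ≤ exp (t * p / 8)) :
    (t.choose k : ℝ) * t.choose (k - 1) * (1 - p) ^ (k * (t - (k - 1))) ≤
      exp (-(1 / 8) * t * p) := by
  set m := min k (t + 1 - k)
  set N := k * (t - (k - 1))
  have hm : 1 ≤ m := le_min hk (by omega)
  have hchoose : ∀ r, min r (t - r) ≤ m → (t.choose r : ℝ) ≤ exp (t * p / 8) ^ m := fun r hr =>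
    (Nat.cast_le.2 (Nat.choose_le_pow_of_min_le (hk.trans hkt) hr)).trans
      (by push_cast; exact pow_le_pow_left₀ (Nat.cast_nonneg t) ht m)
  have hN : m * (t + 1) ≤ 2 * N := by
    have hsplit : t - (k - 1) = t + 1 - k := by omega
    calc m * (t + 1) = m * k + m * (t + 1 - k) := by rw [← Nat.mul_add]; congr 1; omega
      _ ≤ (t + 1 - k) * k + k * (t + 1 - k) :=
        Nat.add_le_add (Nat.mul_le_mul_right _ (min_le_right _ _))
          (Nat.mul_le_mul_right _ (min_le_left _ _))
      _ = 2 * N := by simp only [N, hsplit]; ring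
  have hpow : (1 - p) ^ N ≤ exp (-p) ^ N :=
    pow_le_pow_left₀ (sub_nonneg.2 h1) (one_sub_le_exp_neg p) N
  calc (t.choose k : ℝ) * t.choose (k - 1) * (1 - p) ^ N
      ≤ exp (t * p / 8) ^ m * exp (t * p / 8) ^ m * exp (-p) ^ N := by
        gcongr
        · exact hchoose k (min_le_min le_rfl (by omega))
        · exact hchoose (k - 1) (min_le_min (by omega) (by omega))
    _ = exp (m * (t * p / 4) - p * N) := by
        rw [← exp_nat_mul, ← exp_nat_mul, ← exp_add, ← exp_add]; ring_nf
    _ ≤ exp (-(1 / 8) * t * p) := by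
        have hN' : (m : ℝ) * (t + 1) ≤ 2 * N := by exact_mod_cast hN
        have hm' : (1 : ℝ) ≤ m := by exact_mod_cast hm
        gcongr
        nlinarith [mul_le_mul_of_nonneg_left hN' h0, mul_nonneg (sub_nonneg.2 hm')
          (mul_nonneg (Nat.cast_nonneg t) h0)]

open Real in
lemma bipMeasure_compl_perfectMatchingEvent_le (t : ℕ) {p : ℝ} (h0 : 0 ≤ p) (h1 : p ≤ 1) :
    bipMeasure t p (perfectMatchingEvent t)ᶜ ≤ ENNReal.ofReal (t * exp (-(1 / 8) * t * p)) := by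
  have := isProbabilityMeasure_bipMeasure (t := t) h0 h1
  rcases le_or_gt (t : ℝ) (exp (t * p / 8)) with ht | ht
  · calc _ ≤ ∑ k ∈ Icc 1 t, bipMeasure t p (⋃ S ∈ powersetCard k univ,
            ⋃ T ∈ powersetCard (k - 1) univ, noEdgesBetween S T) :=
          (measure_mono (compl_perfectMatchingEvent_subset t)).trans (measure_biUnion_finset_le _ _)
      _ ≤ ∑ k ∈ Icc 1 t, ENNReal.ofReal (exp (-(1 / 8) * t * p)) := by
          refine sum_le_sum fun k hk => (bipMeasure_biUnion_noEdgesBetween_le h0 h1 k).trans ?_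
          exact ENNReal.ofReal_le_ofReal
            (choose_mul_choose_mul_pow_le h0 h1 (mem_Icc.1 hk).1 (mem_Icc.1 hk).2 ht)
      _ = _ := by
          rw [sum_const, Nat.card_Icc, Nat.add_sub_cancel, nsmul_eq_mul,
            ENNReal.ofReal_mul (Nat.cast_nonneg t), ENNReal.ofReal_natCast]
  · refine prob_le_one.trans (ENNReal.one_le_ofReal.2 ?_)
    rw [show -(1 / 8) * (t : ℝ) * p = -(t * p / 8) by ring, exp_neg, ← div_eq_mul_inv,
      one_le_div (exp_pos _)]
    exact ht.le

/-- There are universal constants `γ > 0` and `C` such that `B(t,p)` contains a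
perfect matching with probability at least `1 - C·t·exp(-γ·t·p)`. -/
theorem bip_perfect_matching :
    ∃ γ : ℝ, 0 < γ ∧ ∃ C : ℝ, ∀ (t : ℕ) (p : ℝ), 0 < p → p < 1 →
      1 - ENNReal.ofReal (C * t * Real.exp (-γ * t * p)) ≤
        bipMeasure t p {ω | ∃ σ : Equiv.Perm (Fin t), ∀ i : Fin t, ω (i, σ i) = true} := by
  refine ⟨1 / 8, by norm_num, 1, fun t p hp0 hp1 => ?_⟩
  have := isProbabilityMeasure_bipMeasure (t := t) hp0.le hp1.le
  rw [one_mul, tsub_le_iff_right]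
  calc 1 = bipMeasure t p (perfectMatchingEvent t ∪ (perfectMatchingEvent t)ᶜ) := by
        rw [Set.union_compl_self, measure_univ]
    _ ≤ bipMeasure t p (perfectMatchingEvent t) + bipMeasure t p (perfectMatchingEvent t)ᶜ :=
        measure_union_le _ _
    _ ≤ _ := add_le_add_right (bipMeasure_compl_perfectMatchingEvent_le t hp0.le hp1.le) _
end
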